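/- arXiv:math/0612098 — 2 statements merged into one kernel-verified Lean document; each statement's English description precedes it below -/
import Mathlib

section
/- Let R = A ⊗ B with A = M_m(ℂ) carrying the trivial grading and B = M₂(ℂ) carrying the Pauli ℤ₂×ℤ₂-grading, and let * be the involution X ↦ Φ⁻¹ Xᵗ Φ with Φ = I_m ⊗ I₂. Then the Lie algebra g = K(R, *) ≅ so(2m) decomposes as g = K(A,I_m)⊗I₂ ⊕ K(A,I_m)⊗X_a ⊕ K(A,I_m)⊗X_b ⊕ H(A,I_m)⊗X_c, where K(A,I_m) = so(m) is the set of skew-symmetric m×m matrices and H(A,I_m) the symmetric ones; this is a ℤ₂×ℤ₂-grading of so(2m) whose identity component is isomorphic to so(m). -/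
open Matrix Kronecker

namespace SO2MAux

variable {m : ℕ}

/-- skew-symmetric matrices as a submodule -/
noncomputable def skewS (n : Type*) : Submodule ℂ (Matrix n n ℂ) where
  carrier := {U | Uᵀ = -U}
  add_mem' := by
    intro a b ha hb
    simp only [Set.mem_setOf_eq] at *
    rw [transpose_add, ha, hb, neg_add]
  zero_mem' := by simp
  smul_mem' := by
    intro c a ha
    simp only [Set.mem_setOf_eq] at *
    rw [transpose_smul, ha, smul_neg]

/-- symmetric matrices as a submodule -/
noncomputable def symS (n : Type*) : Submodule ℂ (Matrix n n ℂ) where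
  carrier := {U | Uᵀ = U}
  add_mem' := by
    intro a b ha hb
    simp only [Set.mem_setOf_eq] at *
    rw [transpose_add, ha, hb]
  zero_mem' := by simp
  smul_mem' := by
    intro c a ha
    simp only [Set.mem_setOf_eq] at *
    rw [transpose_smul, ha]

/-- `U ↦ U ⊗ₖ Y` as a linear map -/
def kron (Y : Matrix (Fin 2) (Fin 2) ℂ) :
    Matrix (Fin m) (Fin m) ℂ →ₗ[ℂ] Matrix (Fin m × Fin 2) (Fin m × Fin 2) ℂ where
  toFun U := U ⊗ₖ Y
  map_add' a b := add_kronecker a b Y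
  map_smul' c a := smul_kronecker c a Y

lemma mem_span_skew (Y : Matrix (Fin 2) (Fin 2) ℂ)
    (A : Matrix (Fin m × Fin 2) (Fin m × Fin 2) ℂ) :
    A ∈ Submodule.span ℂ
      {A | ∃ U : Matrix (Fin m) (Fin m) ℂ, Uᵀ = -U ∧ A = U ⊗ₖ Y} ↔
      ∃ U : Matrix (Fin m) (Fin m) ℂ, Uᵀ = -U ∧ A = U ⊗ₖ Y := by
  have hset : {A | ∃ U : Matrix (Fin m) (Fin m) ℂ, Uᵀ = -U ∧ A = U ⊗ₖ Y}
      = (kron Y) '' (skewS (Fin m) : Set (Matrix (Fin m) (Fin m) ℂ)) := by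
    ext B
    constructor
    · rintro ⟨U, hU, rfl⟩; exact ⟨U, hU, rfl⟩
    · rintro ⟨U, hU, rfl⟩; exact ⟨U, hU, rfl⟩
  rw [hset, ← Submodule.map_span, Submodule.span_eq, Submodule.mem_map]
  constructor
  · rintro ⟨U, hU, rfl⟩; exact ⟨U, hU, rfl⟩
  · rintro ⟨U, hU, rfl⟩; exact ⟨U, hU, rfl⟩

lemma mem_span_sym (Y : Matrix (Fin 2) (Fin 2) ℂ)
    (A : Matrix (Fin m × Fin 2) (Fin m × Fin 2) ℂ) :
    A ∈ Submodule.span ℂ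
      {A | ∃ U : Matrix (Fin m) (Fin m) ℂ, Uᵀ = U ∧ A = U ⊗ₖ Y} ↔
      ∃ U : Matrix (Fin m) (Fin m) ℂ, Uᵀ = U ∧ A = U ⊗ₖ Y := by
  have hset : {A | ∃ U : Matrix (Fin m) (Fin m) ℂ, Uᵀ = U ∧ A = U ⊗ₖ Y}
      = (kron Y) '' (symS (Fin m) : Set (Matrix (Fin m) (Fin m) ℂ)) := by
    ext B
    constructor
    · rintro ⟨U, hU, rfl⟩; exact ⟨U, hU, rfl⟩
    · rintro ⟨U, hU, rfl⟩; exact ⟨U, hU, rfl⟩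
  rw [hset, ← Submodule.map_span, Submodule.span_eq, Submodule.mem_map]
  constructor
  · rintro ⟨U, hU, rfl⟩; exact ⟨U, hU, rfl⟩
  · rintro ⟨U, hU, rfl⟩; exact ⟨U, hU, rfl⟩

/-- block extraction as a linear map -/
def blkL (k l : Fin 2) :
    Matrix (Fin m × Fin 2) (Fin m × Fin 2) ℂ →ₗ[ℂ] Matrix (Fin m) (Fin m) ℂ where
  toFun A := Matrix.of fun i j => A (i, k) (j, l)
  map_add' a b := rfl
  map_smul' c a := rfl

@[simp] lemma blkL_apply (k l : Fin 2) (A : Matrix (Fin m × Fin 2) (Fin m × Fin 2) ℂ)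
    (i j : Fin m) : blkL k l A i j = A (i, k) (j, l) := rfl

lemma blkL_kron (k l : Fin 2) (U : Matrix (Fin m) (Fin m) ℂ)
    (Y : Matrix (Fin 2) (Fin 2) ℂ) : blkL k l (U ⊗ₖ Y) = Y k l • U := by
  ext i j
  simp [mul_comm]

lemma kron_transpose (U : Matrix (Fin m) (Fin m) ℂ) (Y : Matrix (Fin 2) (Fin 2) ℂ) :
    (U ⊗ₖ Y)ᵀ = Uᵀ ⊗ₖ Yᵀ := (kroneckerMap_transpose _ _ _).symm

lemma neg_kron (U : Matrix (Fin m) (Fin m) ℂ) (Y : Matrix (Fin 2) (Fin 2) ℂ) :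
    (-U) ⊗ₖ Y = -(U ⊗ₖ Y) := by
  have := smul_kronecker (-1 : ℂ) U Y
  simpa using this

lemma kron_neg (U : Matrix (Fin m) (Fin m) ℂ) (Y : Matrix (Fin 2) (Fin 2) ℂ) :
    U ⊗ₖ (-Y) = -(U ⊗ₖ Y) := by
  have := kronecker_smul (-1 : ℂ) U Y
  simpa using this

lemma Xa_t : (!![-1, 0; 0, 1] : Matrix (Fin 2) (Fin 2) ℂ)ᵀ = !![-1, 0; 0, 1] := by
  ext i j; fin_cases i <;> fin_cases j <;> rfl

lemma Xb_t : (!![0, 1; 1, 0] : Matrix (Fin 2) (Fin 2) ℂ)ᵀ = !![0, 1; 1, 0] := by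
  ext i j; fin_cases i <;> fin_cases j <;> rfl

lemma Xc_t : (!![0, -1; 1, 0] : Matrix (Fin 2) (Fin 2) ℂ)ᵀ = -(!![0, -1; 1, 0]) := by
  ext i j; fin_cases i <;> fin_cases j <;> simp

lemma sub_kron (U W : Matrix (Fin m) (Fin m) ℂ) (Y : Matrix (Fin 2) (Fin 2) ℂ) :
    (U - W) ⊗ₖ Y = U ⊗ₖ Y - W ⊗ₖ Y := by
  rw [sub_eq_add_neg, add_kronecker, neg_kron, ← sub_eq_add_neg]

lemma bracket_kron (U W : Matrix (Fin m) (Fin m) ℂ)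
    (P Q Z : Matrix (Fin 2) (Fin 2) ℂ) (c d : ℂ)
    (h1 : P * Q = c • Z) (h2 : Q * P = d • Z) :
    (U ⊗ₖ P) * (W ⊗ₖ Q) - (W ⊗ₖ Q) * (U ⊗ₖ P)
      = (c • (U * W) - d • (W * U)) ⊗ₖ Z := by
  rw [← mul_kronecker_mul, ← mul_kronecker_mul, h1, h2, kronecker_smul, kronecker_smul,
    ← smul_kronecker, ← smul_kronecker, ← sub_kron]

/-- the universal block decomposition -/
lemma decomp (A : Matrix (Fin m × Fin 2) (Fin m × Fin 2) ℂ) :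
    A = ((1/2 : ℂ) • (blkL 0 0 A + blkL 1 1 A)) ⊗ₖ (1 : Matrix (Fin 2) (Fin 2) ℂ)
      + ((1/2 : ℂ) • (blkL 1 1 A - blkL 0 0 A)) ⊗ₖ !![-1, 0; 0, 1]
      + ((1/2 : ℂ) • (blkL 0 1 A + blkL 1 0 A)) ⊗ₖ !![0, 1; 1, 0]
      + ((1/2 : ℂ) • (blkL 1 0 A - blkL 0 1 A)) ⊗ₖ !![0, -1; 1, 0] := by
  ext ⟨i, k⟩ ⟨j, l⟩
  fin_cases k <;> fin_cases l <;>
    simp [Matrix.one_apply] <;> ring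

end SO2MAux


open Matrix Kronecker

open SO2MAux in
/-- In `R = M_m(ℂ) ⊗ M₂(ℂ)` (Kronecker product), with the Pauli
`ℤ₂×ℤ₂`-grading on the second factor and the involution `X ↦ Xᵗ` (`Φ = I_m ⊗ I₂`),
the Lie algebra `g = K(R, t) ≅ so(2m)` of skew-symmetric matrices decomposes as
`K(A)⊗I₂ ⊕ K(A)⊗X_a ⊕ K(A)⊗X_b ⊕ H(A)⊗X_c` (with `K(A) = so(m)` the skew and
`H(A)` the symmetric `m×m` matrices). This is a `ℤ₂×ℤ₂`-grading of `so(2m)` whose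
identity component is isomorphic to `so(m)`. -/
theorem so2m_pauli_grading {m : ℕ}
    (X : ZMod 2 × ZMod 2 → Matrix (Fin 2) (Fin 2) ℂ)
    (hXe : X (0, 0) = 1)
    (hXa : X (1, 0) = !![-1, 0; 0, 1])
    (hXb : X (0, 1) = !![0, 1; 1, 0])
    (hXc : X (1, 1) = !![0, -1; 1, 0])
    (V : ZMod 2 × ZMod 2 → Submodule ℂ (Matrix (Fin m × Fin 2) (Fin m × Fin 2) ℂ))
    (hVe : V (0, 0) = Submodule.span ℂ
      {A | ∃ U : Matrix (Fin m) (Fin m) ℂ, Uᵀ = -U ∧ A = U ⊗ₖ X (0, 0)})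
    (hVa : V (1, 0) = Submodule.span ℂ
      {A | ∃ U : Matrix (Fin m) (Fin m) ℂ, Uᵀ = -U ∧ A = U ⊗ₖ X (1, 0)})
    (hVb : V (0, 1) = Submodule.span ℂ
      {A | ∃ U : Matrix (Fin m) (Fin m) ℂ, Uᵀ = -U ∧ A = U ⊗ₖ X (0, 1)})
    (hVc : V (1, 1) = Submodule.span ℂ
      {A | ∃ U : Matrix (Fin m) (Fin m) ℂ, Uᵀ = U ∧ A = U ⊗ₖ X (1, 1)}) :
    (∀ p, ∀ A ∈ V p, Aᵀ = -A) ∧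
    iSupIndep V ∧
    (∀ A : Matrix (Fin m × Fin 2) (Fin m × Fin 2) ℂ, Aᵀ = -A ↔ A ∈ ⨆ p, V p) ∧
    (∀ p q, ∀ A ∈ V p, ∀ B ∈ V q, A * B - B * A ∈ V (p + q)) ∧
    (∃ f : Matrix (Fin m) (Fin m) ℂ →ₗ[ℂ] Matrix (Fin m × Fin 2) (Fin m × Fin 2) ℂ,
      (∀ U, f U = U ⊗ₖ (1 : Matrix (Fin 2) (Fin 2) ℂ)) ∧
      Function.Injective f ∧
      (∀ U W : Matrix (Fin m) (Fin m) ℂ, f (U * W - W * U) = f U * f W - f W * f U) ∧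
      Submodule.map f (Submodule.span ℂ {U : Matrix (Fin m) (Fin m) ℂ | Uᵀ = -U})
        = V (0, 0)) := by
  have hp : ∀ p : ZMod 2 × ZMod 2, p = (0, 0) ∨ p = (1, 0) ∨ p = (0, 1) ∨ p = (1, 1) := by
    decide
  have me : ∀ A, A ∈ V (0, 0) ↔
      ∃ U : Matrix (Fin m) (Fin m) ℂ, Uᵀ = -U ∧ A = U ⊗ₖ (1 : Matrix (Fin 2) (Fin 2) ℂ) := by
    intro A; rw [hVe, hXe]; exact mem_span_skew _ A
  have ma : ∀ A, A ∈ V (1, 0) ↔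
      ∃ U : Matrix (Fin m) (Fin m) ℂ, Uᵀ = -U ∧ A = U ⊗ₖ !![-1, 0; 0, 1] := by
    intro A; rw [hVa, hXa]; exact mem_span_skew _ A
  have mb : ∀ A, A ∈ V (0, 1) ↔
      ∃ U : Matrix (Fin m) (Fin m) ℂ, Uᵀ = -U ∧ A = U ⊗ₖ !![0, 1; 1, 0] := by
    intro A; rw [hVb, hXb]; exact mem_span_skew _ A
  have mc : ∀ A, A ∈ V (1, 1) ↔
      ∃ U : Matrix (Fin m) (Fin m) ℂ, Uᵀ = U ∧ A = U ⊗ₖ !![0, -1; 1, 0] := by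
    intro A; rw [hVc, hXc]; exact mem_span_sym _ A
  have skewAll : ∀ p, ∀ A ∈ V p, Aᵀ = -A := by
    intro p A hA
    rcases hp p with h | h | h | h <;> subst h
    · obtain ⟨U, hU, rfl⟩ := (me A).1 hA
      rw [kron_transpose, hU, transpose_one, neg_kron]
    · obtain ⟨U, hU, rfl⟩ := (ma A).1 hA
      rw [kron_transpose, hU, Xa_t, neg_kron]
    · obtain ⟨U, hU, rfl⟩ := (mb A).1 hA
      rw [kron_transpose, hU, Xb_t, neg_kron]
    · obtain ⟨U, hU, rfl⟩ := (mc A).1 hA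
      rw [kron_transpose, hU, Xc_t, kron_neg]
  have hind : iSupIndep V := by
    rw [iSupIndep_def]
    intro p
    rw [Submodule.disjoint_def]
    rcases hp p with h | h | h | h <;> subst h
    · intro A hAp hAs
      obtain ⟨U, hU, rfl⟩ := (me A).1 hAp
      have hker : (⨆ j, ⨆ (_ : j ≠ ((0 : ZMod 2), (0 : ZMod 2))), V j)
          ≤ LinearMap.ker (blkL 0 0 + blkL 1 1 :
            Matrix (Fin m × Fin 2) (Fin m × Fin 2) ℂ →ₗ[ℂ] Matrix (Fin m) (Fin m) ℂ) := by
        refine iSup_le fun j => iSup_le fun hj => ?_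
        intro B hB
        rcases hp j with h | h | h | h <;> subst h
        · exact absurd rfl hj
        · obtain ⟨W, hW, rfl⟩ := (ma B).1 hB
          simp [LinearMap.mem_ker, blkL_kron, Matrix.one_apply]
        · obtain ⟨W, hW, rfl⟩ := (mb B).1 hB
          simp [LinearMap.mem_ker, blkL_kron, Matrix.one_apply]
        · obtain ⟨W, hW, rfl⟩ := (mc B).1 hB
          simp [LinearMap.mem_ker, blkL_kron, Matrix.one_apply]
      have h0 := hker hAs
      simp only [LinearMap.mem_ker, LinearMap.add_apply, blkL_kron, Matrix.one_apply] at h0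
      norm_num at h0
      have hU0 : U = 0 := by
        have h2 : U = (2 : ℂ)⁻¹ • (U + U) := by module
        rw [h2, h0, smul_zero]
      rw [hU0, zero_kronecker]
    · intro A hAp hAs
      obtain ⟨U, hU, rfl⟩ := (ma A).1 hAp
      have hker : (⨆ j, ⨆ (_ : j ≠ ((1 : ZMod 2), (0 : ZMod 2))), V j)
          ≤ LinearMap.ker (blkL 1 1 - blkL 0 0 :
            Matrix (Fin m × Fin 2) (Fin m × Fin 2) ℂ →ₗ[ℂ] Matrix (Fin m) (Fin m) ℂ) := by
        refine iSup_le fun j => iSup_le fun hj => ?_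
        intro B hB
        rcases hp j with h | h | h | h <;> subst h
        · obtain ⟨W, hW, rfl⟩ := (me B).1 hB
          simp [LinearMap.mem_ker, blkL_kron, Matrix.one_apply]
        · exact absurd rfl hj
        · obtain ⟨W, hW, rfl⟩ := (mb B).1 hB
          simp [LinearMap.mem_ker, blkL_kron, Matrix.one_apply]
        · obtain ⟨W, hW, rfl⟩ := (mc B).1 hB
          simp [LinearMap.mem_ker, blkL_kron, Matrix.one_apply]
      have h0 := hker hAs
      simp only [LinearMap.mem_ker, LinearMap.sub_apply, blkL_kron, Matrix.one_apply] at h0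
      norm_num at h0
      have hU0 : U = 0 := by
        have h2 : U = (2 : ℂ)⁻¹ • (U + U) := by module
        rw [h2, h0, smul_zero]
      rw [hU0, zero_kronecker]
    · intro A hAp hAs
      obtain ⟨U, hU, rfl⟩ := (mb A).1 hAp
      have hker : (⨆ j, ⨆ (_ : j ≠ ((0 : ZMod 2), (1 : ZMod 2))), V j)
          ≤ LinearMap.ker (blkL 0 1 + blkL 1 0 :
            Matrix (Fin m × Fin 2) (Fin m × Fin 2) ℂ →ₗ[ℂ] Matrix (Fin m) (Fin m) ℂ) := by
        refine iSup_le fun j => iSup_le fun hj => ?_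
        intro B hB
        rcases hp j with h | h | h | h <;> subst h
        · obtain ⟨W, hW, rfl⟩ := (me B).1 hB
          simp [LinearMap.mem_ker, blkL_kron, Matrix.one_apply]
        · obtain ⟨W, hW, rfl⟩ := (ma B).1 hB
          simp [LinearMap.mem_ker, blkL_kron, Matrix.one_apply]
        · exact absurd rfl hj
        · obtain ⟨W, hW, rfl⟩ := (mc B).1 hB
          simp [LinearMap.mem_ker, blkL_kron, Matrix.one_apply]
      have h0 := hker hAs
      simp only [LinearMap.mem_ker, LinearMap.add_apply, blkL_kron, Matrix.one_apply] at h0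
      norm_num at h0
      have hU0 : U = 0 := by
        have h2 : U = (2 : ℂ)⁻¹ • (U + U) := by module
        rw [h2, h0, smul_zero]
      rw [hU0, zero_kronecker]
    · intro A hAp hAs
      obtain ⟨U, hU, rfl⟩ := (mc A).1 hAp
      have hker : (⨆ j, ⨆ (_ : j ≠ ((1 : ZMod 2), (1 : ZMod 2))), V j)
          ≤ LinearMap.ker (blkL 1 0 - blkL 0 1 :
            Matrix (Fin m × Fin 2) (Fin m × Fin 2) ℂ →ₗ[ℂ] Matrix (Fin m) (Fin m) ℂ) := by
        refine iSup_le fun j => iSup_le fun hj => ?_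
        intro B hB
        rcases hp j with h | h | h | h <;> subst h
        · obtain ⟨W, hW, rfl⟩ := (me B).1 hB
          simp [LinearMap.mem_ker, blkL_kron, Matrix.one_apply]
        · obtain ⟨W, hW, rfl⟩ := (ma B).1 hB
          simp [LinearMap.mem_ker, blkL_kron, Matrix.one_apply]
        · obtain ⟨W, hW, rfl⟩ := (mb B).1 hB
          simp [LinearMap.mem_ker, blkL_kron, Matrix.one_apply]
        · exact absurd rfl hj
      have h0 := hker hAs
      simp only [LinearMap.mem_ker, LinearMap.sub_apply, blkL_kron, Matrix.one_apply] at h0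
      norm_num at h0
      have hU0 : U = 0 := by
        have h2 : U = (2 : ℂ)⁻¹ • (U + U) := by module
        rw [h2, h0, smul_zero]
      rw [hU0, zero_kronecker]
  have hsup : ∀ A : Matrix (Fin m × Fin 2) (Fin m × Fin 2) ℂ, Aᵀ = -A → A ∈ ⨆ p, V p := by
    intro A hA
    have hpt : ∀ x y, A x y = -A y x := fun x y => by
      simpa using congrFun (congrFun hA y) x
    have h1 : ((1/2 : ℂ) • (blkL 0 0 A + blkL 1 1 A)) ⊗ₖ (1 : Matrix (Fin 2) (Fin 2) ℂ)
        ∈ V (0, 0) := by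
      refine (me _).2 ⟨_, ?_, rfl⟩
      ext i j
      simp only [transpose_apply, Matrix.smul_apply, Matrix.add_apply, Matrix.sub_apply,
        Matrix.neg_apply, blkL_apply, smul_eq_mul]
      rw [hpt (j, 0) (i, 0), hpt (j, 1) (i, 1)]; ring
    have h2 : ((1/2 : ℂ) • (blkL 1 1 A - blkL 0 0 A)) ⊗ₖ !![-1, 0; 0, 1] ∈ V (1, 0) := by
      refine (ma _).2 ⟨_, ?_, rfl⟩
      ext i j
      simp only [transpose_apply, Matrix.smul_apply, Matrix.add_apply, Matrix.sub_apply,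
        Matrix.neg_apply, blkL_apply, smul_eq_mul]
      rw [hpt (j, 1) (i, 1), hpt (j, 0) (i, 0)]; ring
    have h3 : ((1/2 : ℂ) • (blkL 0 1 A + blkL 1 0 A)) ⊗ₖ !![0, 1; 1, 0] ∈ V (0, 1) := by
      refine (mb _).2 ⟨_, ?_, rfl⟩
      ext i j
      simp only [transpose_apply, Matrix.smul_apply, Matrix.add_apply, Matrix.sub_apply,
        Matrix.neg_apply, blkL_apply, smul_eq_mul]
      rw [hpt (j, 0) (i, 1), hpt (j, 1) (i, 0)]; ring
    have h4 : ((1/2 : ℂ) • (blkL 1 0 A - blkL 0 1 A)) ⊗ₖ !![0, -1; 1, 0] ∈ V (1, 1) := by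
      refine (mc _).2 ⟨_, ?_, rfl⟩
      ext i j
      simp only [transpose_apply, Matrix.smul_apply, Matrix.add_apply, Matrix.sub_apply,
        Matrix.neg_apply, blkL_apply, smul_eq_mul]
      rw [hpt (j, 1) (i, 0), hpt (j, 0) (i, 1)]; ring
    have hdec := decomp A
    rw [hdec]
    exact Submodule.add_mem _ (Submodule.add_mem _ (Submodule.add_mem _
      (Submodule.mem_iSup_of_mem (0, 0) h1) (Submodule.mem_iSup_of_mem (1, 0) h2))
      (Submodule.mem_iSup_of_mem (0, 1) h3)) (Submodule.mem_iSup_of_mem (1, 1) h4)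
  refine ⟨skewAll, hind, ?_, ?_, ?_⟩
  · intro A
    constructor
    · exact hsup A
    · intro hA
      have hle : (⨆ p, V p) ≤ skewS (Fin m × Fin 2) :=
        iSup_le fun p B hB => skewAll p B hB
      exact hle hA
  · intro p q A hA B hB
    rcases hp p with h | h | h | h <;> subst h <;> rcases hp q with h | h | h | h <;> subst h
    · obtain ⟨U, hU, rfl⟩ := (me A).1 hA
      obtain ⟨W, hW, rfl⟩ := (me B).1 hB
      rw [show ((0 : ZMod 2), (0 : ZMod 2)) + (0, 0) = (0, 0) by decide]
      refine (me _).2 ⟨(1 : ℂ) • (U * W) - (1 : ℂ) • (W * U), ?_, ?_⟩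
      · simp only [transpose_sub, transpose_smul, transpose_mul, hU, hW,
          mul_neg, neg_mul, neg_neg]
        module
      · exact bracket_kron U W _ _ _ (1 : ℂ) (1 : ℂ)
          (by simp)
          (by simp)
    · obtain ⟨U, hU, rfl⟩ := (me A).1 hA
      obtain ⟨W, hW, rfl⟩ := (ma B).1 hB
      rw [show ((0 : ZMod 2), (0 : ZMod 2)) + (1, 0) = (1, 0) by decide]
      refine (ma _).2 ⟨(1 : ℂ) • (U * W) - (1 : ℂ) • (W * U), ?_, ?_⟩
      · simp only [transpose_sub, transpose_smul, transpose_mul, hU, hW,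
          mul_neg, neg_mul, neg_neg]
        module
      · exact bracket_kron U W _ _ _ (1 : ℂ) (1 : ℂ)
          (by simp)
          (by simp)
    · obtain ⟨U, hU, rfl⟩ := (me A).1 hA
      obtain ⟨W, hW, rfl⟩ := (mb B).1 hB
      rw [show ((0 : ZMod 2), (0 : ZMod 2)) + (0, 1) = (0, 1) by decide]
      refine (mb _).2 ⟨(1 : ℂ) • (U * W) - (1 : ℂ) • (W * U), ?_, ?_⟩
      · simp only [transpose_sub, transpose_smul, transpose_mul, hU, hW,
          mul_neg, neg_mul, neg_neg]
        module
      · exact bracket_kron U W _ _ _ (1 : ℂ) (1 : ℂ)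
          (by simp)
          (by simp)
    · obtain ⟨U, hU, rfl⟩ := (me A).1 hA
      obtain ⟨W, hW, rfl⟩ := (mc B).1 hB
      rw [show ((0 : ZMod 2), (0 : ZMod 2)) + (1, 1) = (1, 1) by decide]
      refine (mc _).2 ⟨(1 : ℂ) • (U * W) - (1 : ℂ) • (W * U), ?_, ?_⟩
      · simp only [transpose_sub, transpose_smul, transpose_mul, hU, hW,
          mul_neg, neg_mul, neg_neg]
        module
      · exact bracket_kron U W _ _ _ (1 : ℂ) (1 : ℂ)
          (by simp)
          (by simp)
    · obtain ⟨U, hU, rfl⟩ := (ma A).1 hA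
      obtain ⟨W, hW, rfl⟩ := (me B).1 hB
      rw [show ((1 : ZMod 2), (0 : ZMod 2)) + (0, 0) = (1, 0) by decide]
      refine (ma _).2 ⟨(1 : ℂ) • (U * W) - (1 : ℂ) • (W * U), ?_, ?_⟩
      · simp only [transpose_sub, transpose_smul, transpose_mul, hU, hW,
          mul_neg, neg_mul, neg_neg]
        module
      · exact bracket_kron U W _ _ _ (1 : ℂ) (1 : ℂ)
          (by simp)
          (by simp)
    · obtain ⟨U, hU, rfl⟩ := (ma A).1 hA
      obtain ⟨W, hW, rfl⟩ := (ma B).1 hB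
      rw [show ((1 : ZMod 2), (0 : ZMod 2)) + (1, 0) = (0, 0) by decide]
      refine (me _).2 ⟨(1 : ℂ) • (U * W) - (1 : ℂ) • (W * U), ?_, ?_⟩
      · simp only [transpose_sub, transpose_smul, transpose_mul, hU, hW,
          mul_neg, neg_mul, neg_neg]
        module
      · exact bracket_kron U W _ _ _ (1 : ℂ) (1 : ℂ)
          (by ext i j; fin_cases i <;> fin_cases j <;> simp [Matrix.mul_apply, Fin.sum_univ_two, Matrix.one_apply])
          (by ext i j; fin_cases i <;> fin_cases j <;> simp [Matrix.mul_apply, Fin.sum_univ_two, Matrix.one_apply])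
    · obtain ⟨U, hU, rfl⟩ := (ma A).1 hA
      obtain ⟨W, hW, rfl⟩ := (mb B).1 hB
      rw [show ((1 : ZMod 2), (0 : ZMod 2)) + (0, 1) = (1, 1) by decide]
      refine (mc _).2 ⟨(1 : ℂ) • (U * W) - ((-1) : ℂ) • (W * U), ?_, ?_⟩
      · simp only [transpose_sub, transpose_smul, transpose_mul, hU, hW,
          mul_neg, neg_mul, neg_neg]
        module
      · exact bracket_kron U W _ _ _ (1 : ℂ) ((-1) : ℂ)
          (by ext i j; fin_cases i <;> fin_cases j <;> simp [Matrix.mul_apply, Fin.sum_univ_two, Matrix.one_apply])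
          (by ext i j; fin_cases i <;> fin_cases j <;> simp [Matrix.mul_apply, Fin.sum_univ_two, Matrix.one_apply])
    · obtain ⟨U, hU, rfl⟩ := (ma A).1 hA
      obtain ⟨W, hW, rfl⟩ := (mc B).1 hB
      rw [show ((1 : ZMod 2), (0 : ZMod 2)) + (1, 1) = (0, 1) by decide]
      refine (mb _).2 ⟨(1 : ℂ) • (U * W) - ((-1) : ℂ) • (W * U), ?_, ?_⟩
      · simp only [transpose_sub, transpose_smul, transpose_mul, hU, hW,
          mul_neg, neg_mul, neg_neg]
        module
      · exact bracket_kron U W _ _ _ (1 : ℂ) ((-1) : ℂ)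
          (by ext i j; fin_cases i <;> fin_cases j <;> simp [Matrix.mul_apply, Fin.sum_univ_two, Matrix.one_apply])
          (by ext i j; fin_cases i <;> fin_cases j <;> simp [Matrix.mul_apply, Fin.sum_univ_two, Matrix.one_apply])
    · obtain ⟨U, hU, rfl⟩ := (mb A).1 hA
      obtain ⟨W, hW, rfl⟩ := (me B).1 hB
      rw [show ((0 : ZMod 2), (1 : ZMod 2)) + (0, 0) = (0, 1) by decide]
      refine (mb _).2 ⟨(1 : ℂ) • (U * W) - (1 : ℂ) • (W * U), ?_, ?_⟩
      · simp only [transpose_sub, transpose_smul, transpose_mul, hU, hW,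
          mul_neg, neg_mul, neg_neg]
        module
      · exact bracket_kron U W _ _ _ (1 : ℂ) (1 : ℂ)
          (by simp)
          (by simp)
    · obtain ⟨U, hU, rfl⟩ := (mb A).1 hA
      obtain ⟨W, hW, rfl⟩ := (ma B).1 hB
      rw [show ((0 : ZMod 2), (1 : ZMod 2)) + (1, 0) = (1, 1) by decide]
      refine (mc _).2 ⟨((-1) : ℂ) • (U * W) - (1 : ℂ) • (W * U), ?_, ?_⟩
      · simp only [transpose_sub, transpose_smul, transpose_mul, hU, hW,
          mul_neg, neg_mul, neg_neg]
        module
      · exact bracket_kron U W _ _ _ ((-1) : ℂ) (1 : ℂ)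
          (by ext i j; fin_cases i <;> fin_cases j <;> simp [Matrix.mul_apply, Fin.sum_univ_two, Matrix.one_apply])
          (by ext i j; fin_cases i <;> fin_cases j <;> simp [Matrix.mul_apply, Fin.sum_univ_two, Matrix.one_apply])
    · obtain ⟨U, hU, rfl⟩ := (mb A).1 hA
      obtain ⟨W, hW, rfl⟩ := (mb B).1 hB
      rw [show ((0 : ZMod 2), (1 : ZMod 2)) + (0, 1) = (0, 0) by decide]
      refine (me _).2 ⟨(1 : ℂ) • (U * W) - (1 : ℂ) • (W * U), ?_, ?_⟩
      · simp only [transpose_sub, transpose_smul, transpose_mul, hU, hW,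
          mul_neg, neg_mul, neg_neg]
        module
      · exact bracket_kron U W _ _ _ (1 : ℂ) (1 : ℂ)
          (by ext i j; fin_cases i <;> fin_cases j <;> simp [Matrix.mul_apply, Fin.sum_univ_two, Matrix.one_apply])
          (by ext i j; fin_cases i <;> fin_cases j <;> simp [Matrix.mul_apply, Fin.sum_univ_two, Matrix.one_apply])
    · obtain ⟨U, hU, rfl⟩ := (mb A).1 hA
      obtain ⟨W, hW, rfl⟩ := (mc B).1 hB
      rw [show ((0 : ZMod 2), (1 : ZMod 2)) + (1, 1) = (1, 0) by decide]
      refine (ma _).2 ⟨((-1) : ℂ) • (U * W) - (1 : ℂ) • (W * U), ?_, ?_⟩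
      · simp only [transpose_sub, transpose_smul, transpose_mul, hU, hW,
          mul_neg, neg_mul, neg_neg]
        module
      · exact bracket_kron U W _ _ _ ((-1) : ℂ) (1 : ℂ)
          (by ext i j; fin_cases i <;> fin_cases j <;> simp [Matrix.mul_apply, Fin.sum_univ_two, Matrix.one_apply])
          (by ext i j; fin_cases i <;> fin_cases j <;> simp [Matrix.mul_apply, Fin.sum_univ_two, Matrix.one_apply])
    · obtain ⟨U, hU, rfl⟩ := (mc A).1 hA
      obtain ⟨W, hW, rfl⟩ := (me B).1 hB
      rw [show ((1 : ZMod 2), (1 : ZMod 2)) + (0, 0) = (1, 1) by decide]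
      refine (mc _).2 ⟨(1 : ℂ) • (U * W) - (1 : ℂ) • (W * U), ?_, ?_⟩
      · simp only [transpose_sub, transpose_smul, transpose_mul, hU, hW,
          mul_neg, neg_mul, neg_neg]
        module
      · exact bracket_kron U W _ _ _ (1 : ℂ) (1 : ℂ)
          (by simp)
          (by simp)
    · obtain ⟨U, hU, rfl⟩ := (mc A).1 hA
      obtain ⟨W, hW, rfl⟩ := (ma B).1 hB
      rw [show ((1 : ZMod 2), (1 : ZMod 2)) + (1, 0) = (0, 1) by decide]
      refine (mb _).2 ⟨((-1) : ℂ) • (U * W) - (1 : ℂ) • (W * U), ?_, ?_⟩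
      · simp only [transpose_sub, transpose_smul, transpose_mul, hU, hW,
          mul_neg, neg_mul, neg_neg]
        module
      · exact bracket_kron U W _ _ _ ((-1) : ℂ) (1 : ℂ)
          (by ext i j; fin_cases i <;> fin_cases j <;> simp [Matrix.mul_apply, Fin.sum_univ_two, Matrix.one_apply])
          (by ext i j; fin_cases i <;> fin_cases j <;> simp [Matrix.mul_apply, Fin.sum_univ_two, Matrix.one_apply])
    · obtain ⟨U, hU, rfl⟩ := (mc A).1 hA
      obtain ⟨W, hW, rfl⟩ := (mb B).1 hB
      rw [show ((1 : ZMod 2), (1 : ZMod 2)) + (0, 1) = (1, 0) by decide]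
      refine (ma _).2 ⟨(1 : ℂ) • (U * W) - ((-1) : ℂ) • (W * U), ?_, ?_⟩
      · simp only [transpose_sub, transpose_smul, transpose_mul, hU, hW,
          mul_neg, neg_mul, neg_neg]
        module
      · exact bracket_kron U W _ _ _ (1 : ℂ) ((-1) : ℂ)
          (by ext i j; fin_cases i <;> fin_cases j <;> simp [Matrix.mul_apply, Fin.sum_univ_two, Matrix.one_apply])
          (by ext i j; fin_cases i <;> fin_cases j <;> simp [Matrix.mul_apply, Fin.sum_univ_two, Matrix.one_apply])
    · obtain ⟨U, hU, rfl⟩ := (mc A).1 hA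
      obtain ⟨W, hW, rfl⟩ := (mc B).1 hB
      rw [show ((1 : ZMod 2), (1 : ZMod 2)) + (1, 1) = (0, 0) by decide]
      refine (me _).2 ⟨((-1) : ℂ) • (U * W) - ((-1) : ℂ) • (W * U), ?_, ?_⟩
      · simp only [transpose_sub, transpose_smul, transpose_mul, hU, hW,
          mul_neg, neg_mul, neg_neg]
        module
      · exact bracket_kron U W _ _ _ ((-1) : ℂ) ((-1) : ℂ)
          (by ext i j; fin_cases i <;> fin_cases j <;> simp [Matrix.mul_apply, Fin.sum_univ_two, Matrix.one_apply])
          (by ext i j; fin_cases i <;> fin_cases j <;> simp [Matrix.mul_apply, Fin.sum_univ_two, Matrix.one_apply])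
  · refine ⟨kron 1, fun U => rfl, ?_, ?_, ?_⟩
    · intro U W h
      ext i j
      have h2 : (U ⊗ₖ (1 : Matrix (Fin 2) (Fin 2) ℂ)) (i, 0) (j, 0)
          = (W ⊗ₖ (1 : Matrix (Fin 2) (Fin 2) ℂ)) (i, 0) (j, 0) := by
        show (kron 1 U) (i, 0) (j, 0) = (kron 1 W) (i, 0) (j, 0)
        rw [h]
      simpa [Matrix.one_apply] using h2
    · intro U W
      show (U * W - W * U) ⊗ₖ (1 : Matrix (Fin 2) (Fin 2) ℂ)
          = (U ⊗ₖ (1 : Matrix (Fin 2) (Fin 2) ℂ)) * (W ⊗ₖ (1 : Matrix (Fin 2) (Fin 2) ℂ))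
            - (W ⊗ₖ (1 : Matrix (Fin 2) (Fin 2) ℂ)) * (U ⊗ₖ (1 : Matrix (Fin 2) (Fin 2) ℂ))
      rw [sub_kron, ← mul_kronecker_mul, ← mul_kronecker_mul, mul_one]
    · rw [Submodule.map_span, hVe, hXe]
      congr 1
      ext B
      constructor
      · rintro ⟨U, hU, rfl⟩; exact ⟨U, hU, rfl⟩
      · rintro ⟨U, hU, rfl⟩; exact ⟨U, hU, rfl⟩
end

section
/- Let R = M_n(ℂ) with the ℤ₂-grading elementary given by the tuple (e^{(k₁)}, a^{(k₂)}) (block-diagonal even part, off-diagonal odd part), and let * be the transpose involution X* = Xᵗ (Φ = I_n). Define g = sl(n) with the ℤ₂×ℤ₂-grading: g_e = K(R_e,*), g_a = K(R_a,*), g_b = H(R_e,*) ∩ sl(n), g_c = H(R_a,*). Then this is a ℤ₂×ℤ₂-grading of sl(n) with identity component g_e ≅ so(k₁) ⊕ so(k₂). -/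
open Matrix


namespace SlnAux
variable {k₁ k₂ : ℕ}
abbrev Mat (k₁ k₂ : ℕ) := Matrix (Fin k₁ ⊕ Fin k₂) (Fin k₁ ⊕ Fin k₂) ℂ

lemma trace_fb (A : Matrix (Fin k₁) (Fin k₁) ℂ) (B : Matrix (Fin k₁) (Fin k₂) ℂ)
    (C : Matrix (Fin k₂) (Fin k₁) ℂ) (D : Matrix (Fin k₂) (Fin k₂) ℂ) :
    trace (fromBlocks A B C D) = trace A + trace D := by
  simp [Matrix.trace, Fintype.sum_sum_type, fromBlocks, Matrix.diag]

lemma neg_self {m n : Type*} {X : Matrix m n ℂ} (h : -X = X) : X = 0 := by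
  have h2 : (2:ℂ) • X = 0 := by rw [two_smul]; nth_rewrite 1 [← h]; abel
  simpa using (smul_eq_zero.mp h2).resolve_left (by norm_num)

lemma skew_trace {k : ℕ} {U : Matrix (Fin k) (Fin k) ℂ} (h : Uᵀ = -U) : trace U = 0 := by
  have : trace Uᵀ = trace (-U) := by rw [h]
  rw [trace_transpose, trace_neg] at this
  have h2 : (2:ℂ) * trace U = 0 := by linear_combination this
  simpa using (mul_eq_zero.mp h2).resolve_left (by norm_num)

def Jm (k₁ k₂ : ℕ) : Mat k₁ k₂ := fromBlocks 1 0 0 (-1)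

lemma JJ : Jm k₁ k₂ * Jm k₁ k₂ = 1 := by
  simp [Jm, fromBlocks_multiply, ← fromBlocks_one]

lemma JAJ (A : Mat k₁ k₂) : Jm k₁ k₂ * A * Jm k₁ k₂ =
    fromBlocks A.toBlocks₁₁ (-A.toBlocks₁₂) (-A.toBlocks₂₁) A.toBlocks₂₂ := by
  conv_lhs => rw [← fromBlocks_toBlocks A]
  simp [Jm, fromBlocks_multiply]

lemma tb11_t (A : Mat k₁ k₂) : (Aᵀ).toBlocks₁₁ = (A.toBlocks₁₁)ᵀ := rfl
lemma tb22_t (A : Mat k₁ k₂) : (Aᵀ).toBlocks₂₂ = (A.toBlocks₂₂)ᵀ := rfl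
lemma tb12_t (A : Mat k₁ k₂) : (Aᵀ).toBlocks₁₂ = (A.toBlocks₂₁)ᵀ := rfl
lemma tb21_t (A : Mat k₁ k₂) : (Aᵀ).toBlocks₂₁ = (A.toBlocks₁₂)ᵀ := rfl
lemma tb11_n (A : Mat k₁ k₂) : (-A).toBlocks₁₁ = -(A.toBlocks₁₁) := rfl
lemma tb22_n (A : Mat k₁ k₂) : (-A).toBlocks₂₂ = -(A.toBlocks₂₂) := rfl
lemma tb12_n (A : Mat k₁ k₂) : (-A).toBlocks₁₂ = -(A.toBlocks₁₂) := rfl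
lemma tb21_n (A : Mat k₁ k₂) : (-A).toBlocks₂₁ = -(A.toBlocks₂₁) := rfl

noncomputable def Qsub (k₁ k₂ : ℕ) (ε δ : ℂ) : Submodule ℂ (Mat k₁ k₂) where
  carrier := {A | trace A = 0 ∧ Aᵀ = ε • A ∧ Jm k₁ k₂ * A * Jm k₁ k₂ = δ • A}
  add_mem' := by
    rintro a b ⟨ha1, ha2, ha3⟩ ⟨hb1, hb2, hb3⟩
    refine ⟨by simp [ha1, hb1], by simp [transpose_add, ha2, hb2, smul_add], ?_⟩
    rw [mul_add, add_mul, ha3, hb3, smul_add]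
  zero_mem' := ⟨by simp, by simp, by simp⟩
  smul_mem' := by
    rintro c a ⟨h1, h2, h3⟩
    refine ⟨by simp [h1], by rw [transpose_smul, h2, smul_comm], ?_⟩
    rw [mul_smul_comm, smul_mul_assoc, h3, smul_comm]

lemma mem_Qsub {ε δ : ℂ} {A : Mat k₁ k₂} : A ∈ Qsub k₁ k₂ ε δ ↔
    trace A = 0 ∧ Aᵀ = ε • A ∧ Jm k₁ k₂ * A * Jm k₁ k₂ = δ • A := Iff.rfl


lemma spanE_eq : Submodule.span ℂ
    {A : Mat k₁ k₂ | ∃ (U : Matrix (Fin k₁) (Fin k₁) ℂ) (T : Matrix (Fin k₂) (Fin k₂) ℂ),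
      Uᵀ = -U ∧ Tᵀ = -T ∧ A = Matrix.fromBlocks U 0 0 T} = Qsub k₁ k₂ (-1) 1 := by
  apply le_antisymm
  · rw [Submodule.span_le]
    rintro A ⟨U, T, hU, hT, rfl⟩
    refine ⟨?_, ?_, ?_⟩
    · rw [trace_fb, skew_trace hU, skew_trace hT, add_zero]
    · simp [fromBlocks_transpose, hU, hT, fromBlocks_smul, fromBlocks_neg]
    · simp [JAJ, toBlocks_fromBlocks₁₁, toBlocks_fromBlocks₁₂, toBlocks_fromBlocks₂₁,
        toBlocks_fromBlocks₂₂]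
  · rintro A ⟨h1, h2, h3⟩
    apply Submodule.subset_span
    rw [one_smul, JAJ] at h3
    obtain ⟨-, h12, h21, -⟩ := fromBlocks_inj.mp (h3.trans (fromBlocks_toBlocks A).symm)
    have h2' : Aᵀ = -A := by rw [h2, neg_one_smul]
    have hU : (A.toBlocks₁₁)ᵀ = -(A.toBlocks₁₁) := by rw [← tb11_t, h2', tb11_n]
    have hT : (A.toBlocks₂₂)ᵀ = -(A.toBlocks₂₂) := by rw [← tb22_t, h2', tb22_n]
    refine ⟨A.toBlocks₁₁, A.toBlocks₂₂, hU, hT, ?_⟩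
    have z12 : A.toBlocks₁₂ = 0 := neg_self h12
    have z21 : A.toBlocks₂₁ = 0 := neg_self h21
    conv_lhs => rw [← fromBlocks_toBlocks A]
    rw [z12, z21]

lemma spanA_eq : Submodule.span ℂ
    {A : Mat k₁ k₂ | ∃ W : Matrix (Fin k₁) (Fin k₂) ℂ, A = Matrix.fromBlocks 0 W (-Wᵀ) 0}
    = Qsub k₁ k₂ (-1) (-1) := by
  apply le_antisymm
  · rw [Submodule.span_le]
    rintro A ⟨W, rfl⟩
    refine ⟨?_, ?_, ?_⟩
    · rw [trace_fb]; simp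
    · simp [fromBlocks_transpose, fromBlocks_smul, fromBlocks_neg]
    · simp [JAJ, toBlocks_fromBlocks₁₁, toBlocks_fromBlocks₁₂, toBlocks_fromBlocks₂₁,
        toBlocks_fromBlocks₂₂, fromBlocks_smul, fromBlocks_neg]
  · rintro A ⟨h1, h2, h3⟩
    apply Submodule.subset_span
    rw [JAJ, neg_one_smul] at h3
    have hAneg : -A = fromBlocks (-A.toBlocks₁₁) (-A.toBlocks₁₂) (-A.toBlocks₂₁) (-A.toBlocks₂₂) := by
      conv_lhs => rw [← fromBlocks_toBlocks A]
      simp [fromBlocks_neg]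
    obtain ⟨h11, -, -, h22⟩ := fromBlocks_inj.mp (h3.trans hAneg)
    have h2' : Aᵀ = -A := by rw [h2, neg_one_smul]
    have h21 : A.toBlocks₂₁ = -(A.toBlocks₁₂)ᵀ := by
      have := congrArg Matrix.toBlocks₂₁ h2'
      rw [tb21_t, tb21_n] at this
      rw [this, neg_neg]
    refine ⟨A.toBlocks₁₂, ?_⟩
    conv_lhs => rw [← fromBlocks_toBlocks A]
    rw [neg_self h11.symm, neg_self h22.symm, h21]

lemma spanB_eq : Submodule.span ℂ
    {A : Mat k₁ k₂ | ∃ (U : Matrix (Fin k₁) (Fin k₁) ℂ) (T : Matrix (Fin k₂) (Fin k₂) ℂ),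
      Uᵀ = U ∧ Tᵀ = T ∧ Matrix.trace U + Matrix.trace T = 0 ∧ A = Matrix.fromBlocks U 0 0 T}
    = Qsub k₁ k₂ 1 1 := by
  apply le_antisymm
  · rw [Submodule.span_le]
    rintro A ⟨U, T, hU, hT, htr, rfl⟩
    refine ⟨by rw [trace_fb, htr], ?_, ?_⟩
    · simp [fromBlocks_transpose, hU, hT]
    · simp [JAJ, toBlocks_fromBlocks₁₁, toBlocks_fromBlocks₁₂, toBlocks_fromBlocks₂₁,
        toBlocks_fromBlocks₂₂]
  · rintro A ⟨h1, h2, h3⟩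
    apply Submodule.subset_span
    rw [one_smul] at h2
    rw [one_smul, JAJ] at h3
    obtain ⟨-, h12, h21, -⟩ := fromBlocks_inj.mp (h3.trans (fromBlocks_toBlocks A).symm)
    have hU : (A.toBlocks₁₁)ᵀ = A.toBlocks₁₁ := by rw [← tb11_t, h2]
    have hT : (A.toBlocks₂₂)ᵀ = A.toBlocks₂₂ := by rw [← tb22_t, h2]
    have htr : Matrix.trace A.toBlocks₁₁ + Matrix.trace A.toBlocks₂₂ = 0 := by
      rw [← trace_fb A.toBlocks₁₁ A.toBlocks₁₂ A.toBlocks₂₁ A.toBlocks₂₂, fromBlocks_toBlocks, h1]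
    refine ⟨A.toBlocks₁₁, A.toBlocks₂₂, hU, hT, htr, ?_⟩
    have z12 : A.toBlocks₁₂ = 0 := neg_self h12
    have z21 : A.toBlocks₂₁ = 0 := neg_self h21
    conv_lhs => rw [← fromBlocks_toBlocks A]
    rw [z12, z21]

lemma spanC_eq : Submodule.span ℂ
    {A : Mat k₁ k₂ | ∃ W : Matrix (Fin k₁) (Fin k₂) ℂ, A = Matrix.fromBlocks 0 W Wᵀ 0}
    = Qsub k₁ k₂ 1 (-1) := by
  apply le_antisymm
  · rw [Submodule.span_le]
    rintro A ⟨W, rfl⟩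
    refine ⟨by rw [trace_fb]; simp, ?_, ?_⟩
    · simp [fromBlocks_transpose]
    · simp [JAJ, toBlocks_fromBlocks₁₁, toBlocks_fromBlocks₁₂, toBlocks_fromBlocks₂₁,
        toBlocks_fromBlocks₂₂, fromBlocks_smul, fromBlocks_neg]
  · rintro A ⟨h1, h2, h3⟩
    apply Submodule.subset_span
    rw [one_smul] at h2
    rw [JAJ, neg_one_smul] at h3
    have hAneg : -A = fromBlocks (-A.toBlocks₁₁) (-A.toBlocks₁₂) (-A.toBlocks₂₁) (-A.toBlocks₂₂) := by
      conv_lhs => rw [← fromBlocks_toBlocks A]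
      simp [fromBlocks_neg]
    obtain ⟨h11, -, -, h22⟩ := fromBlocks_inj.mp (h3.trans hAneg)
    have h21 : A.toBlocks₂₁ = (A.toBlocks₁₂)ᵀ := by
      have := congrArg Matrix.toBlocks₂₁ h2
      rw [tb21_t] at this
      exact this.symm
    refine ⟨A.toBlocks₁₂, ?_⟩
    conv_lhs => rw [← fromBlocks_toBlocks A]
    rw [neg_self h11.symm, neg_self h22.symm, h21]


lemma Qbr {ε δ ε' δ' : ℂ} {A B : Mat k₁ k₂} (hA : A ∈ Qsub k₁ k₂ ε δ)
    (hB : B ∈ Qsub k₁ k₂ ε' δ') :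
    A * B - B * A ∈ Qsub k₁ k₂ (-(ε * ε')) (δ * δ') := by
  obtain ⟨-, hA2, hA3⟩ := hA
  obtain ⟨-, hB2, hB3⟩ := hB
  refine ⟨?_, ?_, ?_⟩
  · rw [trace_sub, trace_mul_comm, sub_self]
  · rw [transpose_sub, transpose_mul, transpose_mul, hA2, hB2]
    simp only [smul_mul_assoc, mul_smul_comm, smul_smul, smul_sub]
    module
  · have key : ∀ X Y : Mat k₁ k₂, Jm k₁ k₂ * (X * Y) * Jm k₁ k₂ =
        (Jm k₁ k₂ * X * Jm k₁ k₂) * (Jm k₁ k₂ * Y * Jm k₁ k₂) := by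
      intro X Y
      simp only [mul_assoc]
      rw [← mul_assoc (Jm k₁ k₂) (Jm k₁ k₂) (Y * Jm k₁ k₂), JJ, one_mul]
    rw [mul_sub, sub_mul, key, key, hA3, hB3]
    simp only [smul_mul_assoc, mul_smul_comm, smul_smul, smul_sub]
    module

noncomputable def Tlin (k₁ k₂ : ℕ) : Mat k₁ k₂ →ₗ[ℂ] Mat k₁ k₂ where
  toFun A := Aᵀ
  map_add' := by intros; simp [transpose_add]
  map_smul' := by intros; simp [transpose_smul]

noncomputable def Clin (k₁ k₂ : ℕ) : Mat k₁ k₂ →ₗ[ℂ] Mat k₁ k₂ :=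
  (LinearMap.mulLeft ℂ (Jm k₁ k₂)).comp (LinearMap.mulRight ℂ (Jm k₁ k₂))

noncomputable def pim (k₁ k₂ : ℕ) (ε δ : ℂ) : Mat k₁ k₂ →ₗ[ℂ] Mat k₁ k₂ :=
  LinearMap.id + ε • Tlin k₁ k₂ + δ • Clin k₁ k₂ + (ε * δ) • ((Tlin k₁ k₂).comp (Clin k₁ k₂))

lemma pim_apply {ε δ ε' δ' : ℂ} {A : Mat k₁ k₂} (hT : Aᵀ = ε' • A)
    (hC : Jm k₁ k₂ * A * Jm k₁ k₂ = δ' • A) :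
    pim k₁ k₂ ε δ A = ((1 + ε * ε') * (1 + δ * δ')) • A := by
  have hC' : Jm k₁ k₂ * (A * Jm k₁ k₂) = δ' • A := by rw [← mul_assoc]; exact hC
  simp only [pim, Clin, Tlin, LinearMap.add_apply, LinearMap.smul_apply, LinearMap.id_apply,
    LinearMap.coe_mk, AddHom.coe_mk, LinearMap.comp_apply, LinearMap.mulLeft_apply,
    LinearMap.mulRight_apply, hC', transpose_smul, hT]
  change A + ε • Aᵀ + δ • δ' • A + (ε * δ) • (δ' • A)ᵀ = _
  rw [transpose_smul, hT]
  module

noncomputable def sgn (x : ZMod 2) : ℂ := if x = 0 then 1 else -1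

lemma sgn_zero : sgn 0 = 1 := if_pos rfl
lemma sgn_one : sgn 1 = -1 := if_neg (by decide)
lemma sgn_mul_self (x : ZMod 2) : sgn x * sgn x = 1 := by
  rcases (by decide : ∀ z : ZMod 2, z = 0 ∨ z = 1) x with rfl | rfl <;> simp [sgn_zero, sgn_one]
lemma sgn_add (x y : ZMod 2) : sgn (x + y) = sgn x * sgn y := by
  rcases (by decide : ∀ z : ZMod 2, z = 0 ∨ z = 1) x with rfl | rfl <;>
    rcases (by decide : ∀ z : ZMod 2, z = 0 ∨ z = 1) y with rfl | rfl <;>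
    simp [sgn_zero, sgn_one, show (1 : ZMod 2) + 1 = 0 from rfl]
lemma sgn_ne {x y : ZMod 2} (h : x ≠ y) : sgn x * sgn y = -1 := by
  rcases (by decide : ∀ z : ZMod 2, z = 0 ∨ z = 1) x with rfl | rfl <;>
    rcases (by decide : ∀ z : ZMod 2, z = 0 ∨ z = 1) y with rfl | rfl <;> simp_all [sgn_zero, sgn_one]

noncomputable def skewS (k : ℕ) : Submodule ℂ (Matrix (Fin k) (Fin k) ℂ) where
  carrier := {U | Uᵀ = -U}
  add_mem' := by intro a b ha hb; rw [Set.mem_setOf_eq, transpose_add, ha, hb, neg_add]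
  zero_mem' := by simp
  smul_mem' := by intro c a ha; rw [Set.mem_setOf_eq, transpose_smul, ha, smul_neg]

lemma span_skew (k : ℕ) :
    Submodule.span ℂ {U : Matrix (Fin k) (Fin k) ℂ | Uᵀ = -U} = skewS k :=
  le_antisymm (Submodule.span_le.mpr fun _ hx => hx) Submodule.subset_span

noncomputable def fmap (k₁ k₂ : ℕ) :
    (Matrix (Fin k₁) (Fin k₁) ℂ × Matrix (Fin k₂) (Fin k₂) ℂ) →ₗ[ℂ] Mat k₁ k₂ where
  toFun p := fromBlocks p.1 0 0 p.2
  map_add' p q := by simp [fromBlocks_add]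
  map_smul' c p := by simp [fromBlocks_smul]

end SlnAux

open SlnAux

/-- Class II grading on `sl(n)`, `n = k₁ + k₂`: `R = M_n(ℂ)` carries
the elementary `ℤ₂`-grading given by `(e^{(k₁)}, a^{(k₂)})` (`R_e` block-diagonal,
`R_a` block-off-diagonal) and the transpose involution (`Φ = I_n`). The
`ℤ₂×ℤ₂`-grading of `g = sl(n)` given by `g_e = K(R_e)`, `g_a = K(R_a)`,
`g_b = H(R_e) ∩ sl(n)`, `g_c = H(R_a)` is a grading of `sl(n)` with identity
component `g_e ≅ so(k₁) ⊕ so(k₂)`. -/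
theorem sln_classII_grading {k₁ k₂ : ℕ}
    (V : ZMod 2 × ZMod 2 → Submodule ℂ (Matrix (Fin k₁ ⊕ Fin k₂) (Fin k₁ ⊕ Fin k₂) ℂ))
    (hVe : V (0, 0) = Submodule.span ℂ
      {A | ∃ (U : Matrix (Fin k₁) (Fin k₁) ℂ) (T : Matrix (Fin k₂) (Fin k₂) ℂ),
        Uᵀ = -U ∧ Tᵀ = -T ∧ A = Matrix.fromBlocks U 0 0 T})
    (hVa : V (1, 0) = Submodule.span ℂ
      {A | ∃ W : Matrix (Fin k₁) (Fin k₂) ℂ, A = Matrix.fromBlocks 0 W (-Wᵀ) 0})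
    (hVb : V (0, 1) = Submodule.span ℂ
      {A | ∃ (U : Matrix (Fin k₁) (Fin k₁) ℂ) (T : Matrix (Fin k₂) (Fin k₂) ℂ),
        Uᵀ = U ∧ Tᵀ = T ∧ Matrix.trace U + Matrix.trace T = 0 ∧
        A = Matrix.fromBlocks U 0 0 T})
    (hVc : V (1, 1) = Submodule.span ℂ
      {A | ∃ W : Matrix (Fin k₁) (Fin k₂) ℂ, A = Matrix.fromBlocks 0 W Wᵀ 0}) :
    iSupIndep V ∧
    (∀ A : Matrix (Fin k₁ ⊕ Fin k₂) (Fin k₁ ⊕ Fin k₂) ℂ,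
      Matrix.trace A = 0 ↔ A ∈ ⨆ p, V p) ∧
    (∀ p q, ∀ A ∈ V p, ∀ B ∈ V q, A * B - B * A ∈ V (p + q)) ∧
    (∃ f : (Matrix (Fin k₁) (Fin k₁) ℂ × Matrix (Fin k₂) (Fin k₂) ℂ) →ₗ[ℂ]
        Matrix (Fin k₁ ⊕ Fin k₂) (Fin k₁ ⊕ Fin k₂) ℂ,
      (∀ U T, f (U, T) = Matrix.fromBlocks U 0 0 T) ∧
      Function.Injective f ∧
      (∀ U U' T T', f (U * U' - U' * U, T * T' - T' * T)
        = f (U, T) * f (U', T') - f (U', T') * f (U, T)) ∧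
      Submodule.map f
        ((Submodule.span ℂ {U : Matrix (Fin k₁) (Fin k₁) ℂ | Uᵀ = -U}).prod
          (Submodule.span ℂ {T : Matrix (Fin k₂) (Fin k₂) ℂ | Tᵀ = -T}))
        = V (0, 0)) := by
  have hVQ : ∀ p : ZMod 2 × ZMod 2, V p = Qsub k₁ k₂ (-(sgn p.2)) (sgn p.1) := by
    rintro ⟨a, b⟩
    have h2 : ∀ x : ZMod 2, x = 0 ∨ x = 1 := by decide
    rcases h2 a with rfl | rfl <;> rcases h2 b with rfl | rfl
    · show V (0, 0) = Qsub k₁ k₂ (-(sgn 0)) (sgn 0)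
      rw [sgn_zero, hVe, spanE_eq]
    · show V (0, 1) = Qsub k₁ k₂ (-(sgn 1)) (sgn 0)
      rw [sgn_zero, sgn_one, neg_neg, hVb, spanB_eq]
    · show V (1, 0) = Qsub k₁ k₂ (-(sgn 0)) (sgn 1)
      rw [sgn_zero, sgn_one, hVa, spanA_eq]
    · show V (1, 1) = Qsub k₁ k₂ (-(sgn 1)) (sgn 1)
      rw [sgn_one, neg_neg, hVc, spanC_eq]
  refine ⟨?_, ?_, ?_, ?_⟩
  · -- independence
    rw [iSupIndep_def]
    intro p
    rw [Submodule.disjoint_def]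
    intro x hxp hxs
    have hker : (⨆ q, ⨆ _ : q ≠ p, V q) ≤ LinearMap.ker (pim k₁ k₂ (-(sgn p.2)) (sgn p.1)) := by
      refine iSup_le fun q => iSup_le fun hq => ?_
      rw [hVQ q]
      rintro y ⟨-, hT, hC⟩
      rw [LinearMap.mem_ker, pim_apply hT hC]
      have hcoef : (1 + -(sgn p.2) * -(sgn q.2)) * (1 + sgn p.1 * sgn q.1) = 0 := by
        have hne : q.1 ≠ p.1 ∨ q.2 ≠ p.2 := by
          by_contra h
          push_neg at h
          exact hq (Prod.ext h.1 h.2)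
        rcases hne with h | h
        · apply mul_eq_zero_of_right
          rw [sgn_ne (Ne.symm h)]
          ring
        · apply mul_eq_zero_of_left
          rw [neg_mul_neg, sgn_ne (Ne.symm h)]
          ring
      rw [hcoef, zero_smul]
    have hx0 := hker hxs
    rw [hVQ p] at hxp
    obtain ⟨-, hT, hC⟩ := hxp
    rw [LinearMap.mem_ker, pim_apply hT hC] at hx0
    have hc : (1 + -(sgn p.2) * -(sgn p.2)) * (1 + sgn p.1 * sgn p.1) = 4 := by
      rw [neg_mul_neg, sgn_mul_self, sgn_mul_self]; norm_num
    rw [hc] at hx0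
    simpa using (smul_eq_zero.mp hx0).resolve_left (by norm_num)
  · -- trace-zero = sup
    intro A
    constructor
    · intro htr
      set K := (2⁻¹ : ℂ) • (A - Aᵀ) with hK
      set S := (2⁻¹ : ℂ) • (A + Aᵀ) with hS
      have hKt : Kᵀ = -K := by
        rw [hK, transpose_smul, transpose_sub, transpose_transpose, ← smul_neg, neg_sub]
      have hSt : Sᵀ = S := by
        rw [hS, transpose_smul, transpose_add, transpose_transpose, add_comm]
      have m1 : fromBlocks K.toBlocks₁₁ 0 0 K.toBlocks₂₂ ∈ V (0, 0) := by
        rw [hVe]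
        exact Submodule.subset_span ⟨K.toBlocks₁₁, K.toBlocks₂₂,
          (by rw [← tb11_t, hKt, tb11_n]), (by rw [← tb22_t, hKt, tb22_n]), rfl⟩
      have m2 : fromBlocks 0 K.toBlocks₁₂ K.toBlocks₂₁ 0 ∈ V (1, 0) := by
        rw [hVa]
        refine Submodule.subset_span ⟨K.toBlocks₁₂, ?_⟩
        have h21 : K.toBlocks₂₁ = -(K.toBlocks₁₂)ᵀ := by
          have h := congrArg Matrix.toBlocks₂₁ hKt
          rw [tb21_t, tb21_n] at h
          rw [h, neg_neg]
        rw [h21]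
      have m3 : fromBlocks S.toBlocks₁₁ 0 0 S.toBlocks₂₂ ∈ V (0, 1) := by
        rw [hVb]
        refine Submodule.subset_span ⟨S.toBlocks₁₁, S.toBlocks₂₂,
          (by rw [← tb11_t, hSt]), (by rw [← tb22_t, hSt]), ?_, rfl⟩
        have htrS : Matrix.trace S = 0 := by
          rw [hS, trace_smul, trace_add, trace_transpose, htr]
          simp
        have e : Matrix.trace S.toBlocks₁₁ + Matrix.trace S.toBlocks₂₂ = Matrix.trace S := by
          conv_rhs => rw [← fromBlocks_toBlocks S]
          rw [trace_fb]
        rw [e, htrS]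
      have m4 : fromBlocks 0 S.toBlocks₁₂ S.toBlocks₂₁ 0 ∈ V (1, 1) := by
        rw [hVc]
        refine Submodule.subset_span ⟨S.toBlocks₁₂, ?_⟩
        have h21 : S.toBlocks₂₁ = (S.toBlocks₁₂)ᵀ := by
          have h := congrArg Matrix.toBlocks₂₁ hSt
          rw [tb21_t] at h
          exact h.symm
        rw [h21]
      have hsum : A = fromBlocks K.toBlocks₁₁ 0 0 K.toBlocks₂₂
          + fromBlocks 0 K.toBlocks₁₂ K.toBlocks₂₁ 0
          + (fromBlocks S.toBlocks₁₁ 0 0 S.toBlocks₂₂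
            + fromBlocks 0 S.toBlocks₁₂ S.toBlocks₂₁ 0) := by
        rw [fromBlocks_add, fromBlocks_add]
        simp only [add_zero, zero_add]
        rw [fromBlocks_toBlocks, fromBlocks_toBlocks, hK, hS]
        module
      rw [hsum]
      exact add_mem (add_mem ((le_iSup V (0, 0)) m1) ((le_iSup V (1, 0)) m2))
        (add_mem ((le_iSup V (0, 1)) m3) ((le_iSup V (1, 1)) m4))
    · intro hA
      refine Submodule.iSup_induction V (motive := fun x => Matrix.trace x = 0) hA ?_ ?_ ?_
      · intro p x hx
        rw [hVQ p] at hx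
        exact hx.1
      · exact trace_zero _ _
      · intro x y hx hy
        rw [trace_add, hx, hy, add_zero]
  · -- bracket
    intro p q A hA B hB
    rw [hVQ p] at hA
    rw [hVQ q] at hB
    rw [hVQ (p + q)]
    have h := Qbr hA hB
    rw [neg_mul_neg] at h
    have e2 : (p + q).2 = p.2 + q.2 := rfl
    have e1 : (p + q).1 = p.1 + q.1 := rfl
    rw [e1, e2, sgn_add, sgn_add]
    exact h
  · -- isomorphism with so(k₁) ⊕ so(k₂)
    refine ⟨fmap k₁ k₂, fun U T => rfl, ?_, ?_, ?_⟩
    · intro x y h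
      have h11 := congrArg Matrix.toBlocks₁₁ h
      have h22 := congrArg Matrix.toBlocks₂₂ h
      simp only [fmap, LinearMap.coe_mk, AddHom.coe_mk, toBlocks_fromBlocks₁₁,
        toBlocks_fromBlocks₂₂] at h11 h22
      exact Prod.ext h11 h22
    · intro U U' T T'
      show fromBlocks _ 0 0 _ = _
      rw [show (fmap k₁ k₂) (U, T) = fromBlocks U 0 0 T from rfl,
        show (fmap k₁ k₂) (U', T') = fromBlocks U' 0 0 T' from rfl,
        fromBlocks_multiply, fromBlocks_multiply]
      simp [sub_eq_add_neg, fromBlocks_add, fromBlocks_neg]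
    · rw [span_skew, span_skew, hVe]
      apply le_antisymm
      · intro A hA
        obtain ⟨⟨U, T⟩, hUT, rfl⟩ := hA
        exact Submodule.subset_span ⟨U, T, hUT.1, hUT.2, rfl⟩
      · rw [Submodule.span_le]
        rintro A ⟨U, T, hU, hT, rfl⟩
        exact ⟨(U, T), ⟨hU, hT⟩, rfl⟩
end
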